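/- Let α > 0 and let γ satisfy 0 < γ < min(1, α). Then there exists a constant C > 0, depending only on p, α and γ (in particular independent of n), such that for every integer n ≥ 0, every μ > 0, and every radial function φ with |φ(|t|_p)| ≤ μ |t|_p^{nα−(n+1)γ} for all t ≠ 0, one has |(I^α φ)(|t|_p)| ≤ C μ |t|_p^{(n+1)(α−γ)} for all t ≠ 0. -/

import Mathlib

open MeasureTheory Metric

noncomputable section

variable (p : ℕ) [Fact p.Prime]

instance : MeasurableSpace ℚ_[p] := borel _
instance : BorelSpace ℚ_[p] := ⟨rfl⟩

/-- The closed unit ball of `ℚ_[p]` as a positive compact set. -/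
def unitBallPC : TopologicalSpace.PositiveCompacts ℚ_[p] where
  carrier := closedBall 0 1
  isCompact' := isCompact_closedBall 0 1
  interior_nonempty' := ⟨0, mem_interior_iff_mem_nhds.2
    (Filter.mem_of_superset (ball_mem_nhds 0 one_pos) ball_subset_closedBall)⟩

/-- The Haar measure on `ℚ_[p]` normalized so the unit ball has measure 1. -/
def padicHaar : Measure ℚ_[p] := Measure.addHaarMeasure (unitBallPC p)

/-- A point on the sphere of radius `p^k`. -/
def sph (k : ℤ) : ℚ_[p] := (p : ℚ_[p]) ^ (-k)

/-- A function is radial if it depends only on the p-adic absolute value. -/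
def Radial (u : ℚ_[p] → ℝ) : Prop := ∀ x y : ℚ_[p], ‖x‖ = ‖y‖ → u x = u y

/-- The integrand of the Vladimirov operator `D^α` at `x`. -/
def Dker (α : ℝ) (u : ℚ_[p] → ℝ) (x : ℚ_[p]) : ℚ_[p] → ℝ :=
  fun y => ‖y‖ ^ (-α - 1) * (u (x - y) - u x)

/-- The Vladimirov fractional differentiation operator. -/
def Dop (α : ℝ) (u : ℚ_[p] → ℝ) (x : ℚ_[p]) : ℝ :=
  ((1 - (p : ℝ) ^ α) / (1 - (p : ℝ) ^ (-α - 1))) * ∫ y, Dker p α u x y ∂(padicHaar p)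

/-- The kernel of the fractional integral `I^α`. -/
def Iker (α : ℝ) (x y : ℚ_[p]) : ℝ :=
  if α = 1 then Real.log ‖x - y‖ - Real.log ‖y‖
  else ‖x - y‖ ^ (α - 1) - ‖y‖ ^ (α - 1)

/-- The constant in front of the fractional integral. -/
def Icoef (α : ℝ) : ℝ :=
  if α = 1 then (1 - (p : ℝ)) / (p * Real.log p)
  else (1 - (p : ℝ) ^ (-α)) / (1 - (p : ℝ) ^ (α - 1))

/-- The p-adic fractional integral `I^α`. -/
def Iop (α : ℝ) (u : ℚ_[p] → ℝ) (x : ℚ_[p]) : ℝ :=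
  Icoef p α * ∫ y in {y : ℚ_[p] | ‖y‖ ≤ ‖x‖}, Iker p α x y * u y ∂(padicHaar p)

end

noncomputable section Aux

open ENNReal

variable {p : ℕ} [Fact p.Prime]

instance padicHaar_isAddHaar (p : ℕ) [Fact p.Prime] : (padicHaar p).IsAddHaarMeasure :=
  Measure.isAddHaarMeasure_addHaarMeasure _

instance padicHaar_regular (p : ℕ) [Fact p.Prime] : (padicHaar p).Regular :=
  Measure.regular_addHaarMeasure

instance padicHaar_negInv (p : ℕ) [Fact p.Prime] : (padicHaar p).IsNegInvariant := by
  infer_instance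

/-- The closed ball of radius `p^k`. -/
def pB (p : ℕ) [Fact p.Prime] (k : ℤ) : Set ℚ_[p] := {y : ℚ_[p] | ‖y‖ ≤ (p : ℝ) ^ k}

lemma measurableSet_pB (k : ℤ) : MeasurableSet (pB p k) :=
  (isClosed_le (continuous_norm) continuous_const).measurableSet

lemma one_lt_pR : (1 : ℝ) < (p : ℝ) := by
  exact_mod_cast (Fact.out : p.Prime).one_lt

lemma pR_pos : (0:ℝ) < (p:ℝ) := lt_trans one_pos one_lt_pR

lemma pB_zero : pB p 0 = closedBall (0:ℚ_[p]) 1 := by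
  ext y; simp [pB, mem_closedBall, dist_zero_right]

lemma padicHaar_pB_zero : padicHaar p (pB p 0) = 1 := by
  rw [pB_zero]
  exact Measure.addHaarMeasure_self (K₀ := unitBallPC p)

lemma norm_natCast_le_one (i : ℕ) : ‖(i : ℚ_[p])‖ ≤ 1 := by
  exact_mod_cast Padic.norm_int_le_one (p := p) (i : ℤ)

/-- Decomposition of a ball into `p` coset balls. -/
lemma pB_succ_eq_iUnion (k : ℤ) :
    pB p (k+1) = ⋃ i : Fin p, (fun y => y - (i : ℚ_[p]) * (p:ℚ_[p])^(-(k+1))) ⁻¹' pB p k := by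
  ext y
  simp only [Set.mem_iUnion, Set.mem_preimage, pB, Set.mem_setOf_eq]
  constructor
  · intro hy
    have hz : ‖y * (p:ℚ_[p])^(k+1)‖ ≤ 1 := by
      rw [norm_mul, Padic.norm_p_zpow]
      calc ‖y‖ * (p:ℝ) ^ (-(k+1)) ≤ (p:ℝ)^(k+1) * (p:ℝ)^(-(k+1)) := by
            apply mul_le_mul_of_nonneg_right hy (zpow_nonneg (le_of_lt pR_pos) _)
        _ = 1 := by rw [← zpow_add₀ (ne_of_gt pR_pos), add_neg_cancel, zpow_zero]
    set z : ℤ_[p] := ⟨y * (p:ℚ_[p])^(k+1), hz⟩ with hzdef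
    have hlt : z.appr 1 < p := by simpa using z.appr_lt 1
    have hspec : ‖z - ((z.appr 1 : ℕ) : ℤ_[p])‖ ≤ (p:ℝ)^(-(1:ℕ):ℤ) :=
      (PadicInt.norm_le_pow_iff_mem_span_pow _ 1).2 (z.appr_spec 1)
    refine ⟨⟨z.appr 1, hlt⟩, ?_⟩
    have key : y - ((z.appr 1 : ℚ_[p])) * (p:ℚ_[p])^(-(k+1))
        = ((z : ℚ_[p]) - (z.appr 1 : ℚ_[p])) * (p:ℚ_[p])^(-(k+1)) := by
      have hy' : (z : ℚ_[p]) = y * (p:ℚ_[p])^(k+1) := rfl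
      rw [hy', sub_mul, mul_assoc, ← zpow_add₀ (by exact_mod_cast (Fact.out : p.Prime).ne_zero : (p:ℚ_[p]) ≠ 0), add_neg_cancel, zpow_zero, mul_one]
    have hnormz : ‖(z : ℚ_[p]) - (z.appr 1 : ℚ_[p])‖ ≤ (p:ℝ)^(-(1:ℤ)) := by
      have := hspec
      rw [PadicInt.norm_def] at this
      simpa using this
    rw [Fin.val_mk, key, norm_mul, Padic.norm_p_zpow]
    calc ‖(z:ℚ_[p]) - (z.appr 1 : ℚ_[p])‖ * (p:ℝ)^(-(-(k+1)))
        ≤ (p:ℝ)^(-(1:ℤ)) * (p:ℝ)^(k+1) := by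
          rw [neg_neg]
          exact mul_le_mul_of_nonneg_right hnormz (zpow_nonneg (le_of_lt pR_pos) _)
      _ = (p:ℝ)^k := by rw [← zpow_add₀ (ne_of_gt pR_pos)]; ring_nf
  · rintro ⟨i, hi⟩
    have h1 : ‖(i : ℚ_[p]) * (p:ℚ_[p])^(-(k+1))‖ ≤ (p:ℝ)^(k+1) := by
      rw [norm_mul, Padic.norm_p_zpow, neg_neg]
      calc ‖(i : ℚ_[p])‖ * (p:ℝ)^(k+1) ≤ 1 * (p:ℝ)^(k+1) :=
            mul_le_mul_of_nonneg_right (norm_natCast_le_one _) (zpow_nonneg (le_of_lt pR_pos) _)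
        _ = (p:ℝ)^(k+1) := one_mul _
    have h2 : ‖y - (i : ℚ_[p]) * (p:ℚ_[p])^(-(k+1))‖ ≤ (p:ℝ)^(k+1) :=
      le_trans hi (by
        apply zpow_le_zpow_right₀ (le_of_lt one_lt_pR); omega)
    calc ‖y‖ = ‖(y - (i : ℚ_[p]) * (p:ℚ_[p])^(-(k+1))) + (i : ℚ_[p]) * (p:ℚ_[p])^(-(k+1))‖ := by
          ring_nf
      _ ≤ max ‖y - (i : ℚ_[p]) * (p:ℚ_[p])^(-(k+1))‖ ‖(i : ℚ_[p]) * (p:ℚ_[p])^(-(k+1))‖ :=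
          Padic.nonarchimedean _ _
      _ ≤ (p:ℝ)^(k+1) := max_le h2 h1

lemma norm_natCast_eq_one_of_lt {i : ℕ} (hi : 0 < i) (hip : i < p) : ‖(i : ℚ_[p])‖ = 1 := by
  have hnd : ¬ (p:ℤ) ∣ (i:ℤ) := by
    intro h
    have := Int.le_of_dvd (by exact_mod_cast hi) h
    omega
  have h1 : ‖((i:ℤ) : ℚ_[p])‖ ≤ 1 := Padic.norm_int_le_one _
  have h2 : ¬ ‖((i:ℤ) : ℚ_[p])‖ < 1 := by
    rw [Padic.norm_intCast_lt_one_iff]; exact hnd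
  have : ‖((i:ℤ) : ℚ_[p])‖ = 1 := le_antisymm h1 (not_lt.1 h2)
  exact_mod_cast this

lemma pB_disjoint (k : ℤ) : Pairwise (Function.onFun Disjoint
    (fun i : Fin p => (fun y => y - (i : ℚ_[p]) * (p:ℚ_[p])^(-(k+1))) ⁻¹' pB p k)) := by
  intro i j hij
  rw [Function.onFun, Set.disjoint_left]
  intro y hyi hyj
  simp only [Set.mem_preimage, pB, Set.mem_setOf_eq] at hyi hyj
  have hd : ‖((i : ℚ_[p]) - (j : ℚ_[p])) * (p:ℚ_[p])^(-(k+1))‖ ≤ (p:ℝ)^k := by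
    have : (i : ℚ_[p]) * (p:ℚ_[p])^(-(k+1)) - (j : ℚ_[p]) * (p:ℚ_[p])^(-(k+1))
        = (y - (j : ℚ_[p]) * (p:ℚ_[p])^(-(k+1))) - (y - (i : ℚ_[p]) * (p:ℚ_[p])^(-(k+1))) := by ring
    rw [← sub_mul] at this
    rw [this, sub_eq_add_neg]
    refine le_trans (Padic.nonarchimedean _ _) (max_le hyj (by rwa [norm_neg]))
  -- but the norm is exactly p^(k+1)
  have hne : ‖((i : ℚ_[p]) - (j : ℚ_[p]))‖ = 1 := by
    rcases lt_or_gt_of_ne (fun h => hij (Fin.ext (by exact_mod_cast h : (i:ℕ) = (j:ℕ)))) with h | h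
    · have : ((j - i : ℕ) : ℚ_[p]) = (j : ℚ_[p]) - (i : ℚ_[p]) := by
        push_cast [Nat.cast_sub (le_of_lt h)]; ring
      rw [← norm_neg, neg_sub, ← this]
      exact norm_natCast_eq_one_of_lt (by omega) (by omega)
    · have : ((i - j : ℕ) : ℚ_[p]) = (i : ℚ_[p]) - (j : ℚ_[p]) := by
        push_cast [Nat.cast_sub (le_of_lt h)]; ring
      rw [← this]
      exact norm_natCast_eq_one_of_lt (by omega) (by omega)
  rw [norm_mul, hne, one_mul, Padic.norm_p_zpow, neg_neg] at hd
  have := (zpow_le_zpow_iff_right₀ one_lt_pR).1 hd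
  omega

lemma padicHaar_pB_succ (k : ℤ) : padicHaar p (pB p (k+1)) = p * padicHaar p (pB p k) := by
  rw [pB_succ_eq_iUnion k, measure_iUnion (pB_disjoint k)
    (fun i => (measurableSet_pB k).preimage (measurable_id.sub_const _))]
  have hval : ∀ i : Fin p, padicHaar p ((fun y => y - (i : ℚ_[p]) * (p:ℚ_[p])^(-(k+1))) ⁻¹' pB p k)
      = padicHaar p (pB p k) := by
    intro i
    have : (fun y : ℚ_[p] => y - (i : ℚ_[p]) * (p:ℚ_[p])^(-(k+1)))
        = (fun y : ℚ_[p] => (-((i : ℚ_[p]) * (p:ℚ_[p])^(-(k+1)))) + y) := by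
      funext y; ring
    rw [this]
    exact measure_preimage_add _ _ _
  simp only [hval, tsum_fintype, Finset.sum_const, Finset.card_univ, Fintype.card_fin, nsmul_eq_mul]

lemma padicHaar_pB (k : ℤ) : padicHaar p (pB p k) = (p : ℝ≥0∞) ^ k := by
  have hp0 : (p : ℝ≥0∞) ≠ 0 := by exact_mod_cast (Fact.out : p.Prime).ne_zero
  have hpt : (p : ℝ≥0∞) ≠ ⊤ := ENNReal.natCast_ne_top p
  induction k using Int.induction_on with
  | zero => simpa using padicHaar_pB_zero (p := p)
  | succ n ih => rw [padicHaar_pB_succ, ih, ENNReal.zpow_add hp0 hpt (n:ℤ) 1, zpow_one]; ring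
  | pred n ih =>
      have step := padicHaar_pB_succ (p := p) (-(n:ℤ) - 1)
      rw [sub_add_cancel, ih] at step
      have : (p : ℝ≥0∞) ^ (-(n:ℤ) - 1) = (p : ℝ≥0∞)⁻¹ * (p : ℝ≥0∞) ^ (-(n:ℤ)) := by
        have : -(n:ℤ) - 1 = (-1) + (-(n:ℤ)) := by ring
        rw [this, ENNReal.zpow_add hp0 hpt, zpow_neg_one]
      rw [this, step, ← mul_assoc, ENNReal.inv_mul_cancel hp0 hpt, one_mul]

lemma padicHaar_singleton (x : ℚ_[p]) : padicHaar p {x} = 0 := by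
  have hb : ∀ j : ℕ, padicHaar p {x} ≤ (p : ℝ≥0∞) ^ (-(j:ℤ)) := by
    intro j
    have hsub : {x} ⊆ (fun y : ℚ_[p] => (-x) + y) ⁻¹' pB p (-(j:ℤ)) := by
      intro y hy
      simp only [Set.mem_singleton_iff] at hy
      subst hy
      simp [pB, Set.mem_preimage, zpow_nonneg (le_of_lt pR_pos)]
    calc padicHaar p {x} ≤ padicHaar p ((fun y : ℚ_[p] => (-x) + y) ⁻¹' pB p (-(j:ℤ))) :=
          measure_mono hsub
      _ = padicHaar p (pB p (-(j:ℤ))) := measure_preimage_add _ _ _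
      _ = (p : ℝ≥0∞) ^ (-(j:ℤ)) := padicHaar_pB _
  have hp1 : (p : ℝ≥0∞)⁻¹ < 1 := by
    rw [ENNReal.inv_lt_one]
    exact_mod_cast (Fact.out : p.Prime).one_lt
  have htend : Filter.Tendsto (fun j : ℕ => (p : ℝ≥0∞) ^ (-(j:ℤ))) Filter.atTop (nhds 0) := by
    have : (fun j : ℕ => (p : ℝ≥0∞) ^ (-(j:ℤ))) = fun j : ℕ => ((p : ℝ≥0∞)⁻¹) ^ j := by
      funext j; rw [ENNReal.zpow_neg, ← ENNReal.inv_pow, zpow_natCast]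
    rw [this]
    exact ENNReal.tendsto_pow_atTop_nhds_zero_of_lt_one hp1
  exact le_antisymm (ge_of_tendsto' htend hb) zero_le

/-- The sphere of radius `p^k`. -/
def pS (p : ℕ) [Fact p.Prime] (k : ℤ) : Set ℚ_[p] := {y : ℚ_[p] | ‖y‖ = (p : ℝ) ^ k}

lemma measurableSet_pS (k : ℤ) : MeasurableSet (pS p k) :=
  (isClosed_eq continuous_norm continuous_const).measurableSet

lemma ennp_zpow_eq_rpow (k : ℤ) : (p : ℝ≥0∞) ^ k = (p : ℝ≥0∞) ^ ((k:ℤ):ℝ) := by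
  rw [ENNReal.rpow_intCast]

lemma enn_norm_rpow {y : ℚ_[p]} {k : ℤ} (hy : ‖y‖ = (p:ℝ)^k) (s : ℝ) :
    (‖y‖₊ : ℝ≥0∞) ^ s = (p : ℝ≥0∞) ^ ((k:ℝ) * s) := by
  have h1 : (‖y‖₊ : ℝ≥0∞) = ENNReal.ofReal ‖y‖ := (ofReal_norm y).symm
  rw [h1, hy, ← Real.rpow_intCast (p:ℝ) k, ← ENNReal.ofReal_rpow_of_pos pR_pos,
    ← ENNReal.rpow_mul]
  congr 1
  simp [ENNReal.ofReal_natCast]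

lemma pB_diff_zero_eq (m : ℤ) : pB p m \ {0} = ⋃ j : ℕ, pS p (m - j) := by
  ext y
  simp only [Set.mem_diff, Set.mem_singleton_iff, Set.mem_iUnion, pB, pS, Set.mem_setOf_eq]
  constructor
  · rintro ⟨hle, hne⟩
    have hv := Padic.norm_eq_zpow_neg_valuation hne
    have hvm : -y.valuation ≤ m := by
      rw [hv] at hle
      exact (zpow_le_zpow_iff_right₀ one_lt_pR).1 hle
    refine ⟨(m + y.valuation).toNat, ?_⟩
    rw [hv]
    congr 1
    omega
  · rintro ⟨j, hj⟩
    have hpos : (0:ℝ) < (p:ℝ) ^ (m - (j:ℤ)) := zpow_pos pR_pos _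
    constructor
    · rw [hj]
      apply zpow_le_zpow_right₀ (le_of_lt one_lt_pR)
      omega
    · intro h
      rw [h] at hj
      simp only [norm_zero] at hj
      exact absurd hj.symm (ne_of_gt hpos)

lemma lint_rpow_pB (s : ℝ) (m : ℤ) :
    ∫⁻ y in pB p m, (‖y‖₊ : ℝ≥0∞) ^ s ∂(padicHaar p)
      ≤ (1 - (p:ℝ≥0∞) ^ (-(s+1)))⁻¹ * (p:ℝ≥0∞) ^ ((m:ℝ) * (s+1)) := by
  set c : ℝ≥0∞ := (p : ℝ≥0∞) with hc
  have hp0 : c ≠ 0 := by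
    rw [hc]; exact_mod_cast (Fact.out : p.Prime).ne_zero
  have hpt : c ≠ ⊤ := ENNReal.natCast_ne_top p
  have hres : (padicHaar p).restrict (pB p m) = (padicHaar p).restrict (pB p m \ {0}) := by
    apply Measure.restrict_congr_set
    rw [MeasureTheory.ae_eq_set]
    constructor
    · exact measure_mono_null (fun y hy => by
        simp only [Set.mem_diff, Set.mem_diff, Set.mem_singleton_iff, not_and, not_not] at hy ⊢
        exact hy.2 hy.1) (padicHaar_singleton 0)
    · refine measure_mono_null ?_ (padicHaar_singleton (0:ℚ_[p]))
      rintro y ⟨⟨hy1, _⟩, hy2⟩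
      exact absurd hy1 hy2
  rw [show (∫⁻ y in pB p m, (‖y‖₊ : ℝ≥0∞) ^ s ∂(padicHaar p))
      = ∫⁻ y in pB p m \ {0}, (‖y‖₊ : ℝ≥0∞) ^ s ∂(padicHaar p) from by rw [hres]]
  rw [pB_diff_zero_eq m,
    lintegral_iUnion (fun j => measurableSet_pS _) ?hdisj (fun y => (‖y‖₊ : ℝ≥0∞) ^ s)]
  case hdisj =>
    intro i j hij
    rw [Function.onFun, Set.disjoint_left]
    intro y hyi hyj
    simp only [pS, Set.mem_setOf_eq] at hyi hyj
    rw [hyi] at hyj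
    have := (zpow_right_injective₀ pR_pos one_lt_pR.ne') hyj
    omega
  have hterm : ∀ j : ℕ, (∫⁻ y in pS p (m - j), (‖y‖₊ : ℝ≥0∞) ^ s ∂(padicHaar p))
      ≤ c ^ ((m:ℝ) * (s+1)) * (c ^ (-(s+1))) ^ j := by
    intro j
    have hconst : (∫⁻ y in pS p (m - j), (‖y‖₊ : ℝ≥0∞) ^ s ∂(padicHaar p))
        = c ^ ((((m - j : ℤ)):ℝ) * s) * padicHaar p (pS p (m - j)) := by
      rw [setLIntegral_congr_fun (measurableSet_pS _)
        (fun y hy => enn_norm_rpow hy s), lintegral_const,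
        Measure.restrict_apply MeasurableSet.univ, Set.univ_inter]
    rw [hconst]
    have hmeas : padicHaar p (pS p (m - j)) ≤ c ^ (((m - j : ℤ)):ℝ) := by
      rw [← ennp_zpow_eq_rpow, ← padicHaar_pB (p := p) (m - j)]
      apply measure_mono
      intro y hy
      exact le_of_eq hy
    calc c ^ ((((m - j : ℤ)):ℝ) * s) * padicHaar p (pS p (m - j))
        ≤ c ^ ((((m - j : ℤ)):ℝ) * s) * c ^ (((m - j : ℤ)):ℝ) :=
          mul_le_mul_right hmeas _
      _ = c ^ ((((m - j : ℤ)):ℝ) * s + (((m - j : ℤ)):ℝ)) := (ENNReal.rpow_add _ _ hp0 hpt).symm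
      _ = c ^ ((m:ℝ) * (s+1) + (-(s+1)) * (j:ℝ)) := by
          congr 1
          push_cast
          ring
      _ = c ^ ((m:ℝ) * (s+1)) * c ^ ((-(s+1)) * (j:ℝ)) := ENNReal.rpow_add _ _ hp0 hpt
      _ = c ^ ((m:ℝ) * (s+1)) * (c ^ (-(s+1))) ^ j := by
          rw [show c ^ ((-(s+1)) * (j:ℝ)) = (c ^ (-(s+1))) ^ j from by
            rw [ENNReal.rpow_mul, ENNReal.rpow_natCast]]
  calc (∑' j : ℕ, ∫⁻ y in pS p (m - j), (‖y‖₊ : ℝ≥0∞) ^ s ∂(padicHaar p))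
      ≤ ∑' j : ℕ, c ^ ((m:ℝ) * (s+1)) * (c ^ (-(s+1))) ^ j := ENNReal.tsum_le_tsum hterm
    _ = c ^ ((m:ℝ) * (s+1)) * (1 - c ^ (-(s+1)))⁻¹ := by
        rw [ENNReal.tsum_mul_left, ENNReal.tsum_geometric]
    _ = (1 - c ^ (-(s+1)))⁻¹ * c ^ ((m:ℝ) * (s+1)) := mul_comm _ _

lemma measurable_enn_rpow (a : ℝ) :
    Measurable (fun y : ℚ_[p] => (‖y‖₊ : ℝ≥0∞) ^ a) :=
  (ENNReal.continuous_rpow_const.comp (ENNReal.continuous_coe.comp continuous_nnnorm)).measurable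

lemma norm_sub_eq_left {x y : ℚ_[p]} (h : ‖y‖ < ‖x‖) : ‖x - y‖ = ‖x‖ := by
  rw [sub_eq_add_neg, Padic.add_eq_max_of_ne (by rw [norm_neg]; exact ne_of_gt h)]
  rw [norm_neg]
  exact max_eq_left (le_of_lt h)

lemma sub_preimage_pB {x : ℚ_[p]} {m : ℤ} (hx : ‖x‖ ≤ (p:ℝ)^m) :
    (fun y : ℚ_[p] => x - y) ⁻¹' pB p m = pB p m := by
  ext y
  simp only [Set.mem_preimage, pB, Set.mem_setOf_eq]
  constructor
  · intro h
    calc ‖y‖ = ‖x - (x - y)‖ := by ring_nf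
      _ ≤ max ‖x‖ ‖x - y‖ := by
          rw [sub_eq_add_neg]
          refine le_trans (Padic.nonarchimedean _ _) ?_
          rw [norm_neg]
      _ ≤ (p:ℝ)^m := max_le hx h
  · intro h
    calc ‖x - y‖ ≤ max ‖x‖ ‖y‖ := by
          rw [sub_eq_add_neg]
          refine le_trans (Padic.nonarchimedean _ _) ?_
          rw [norm_neg]
      _ ≤ (p:ℝ)^m := max_le hx h

lemma norm_eq_pm_of_mem_diff {y : ℚ_[p]} {m : ℤ} (hy : y ∈ pB p m \ pB p (m-1)) :
    ‖y‖ = (p:ℝ)^m := by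
  obtain ⟨hy1, hy2⟩ := hy
  simp only [pB, Set.mem_setOf_eq] at hy1 hy2
  push_neg at hy2
  have hne : y ≠ 0 := by
    intro h
    rw [h, norm_zero] at hy2
    exact absurd (zpow_nonneg (le_of_lt pR_pos) (m-1)) (not_le.2 hy2)
  have hv := Padic.norm_eq_zpow_neg_valuation hne
  rw [hv] at hy1 hy2 ⊢
  have h1 : -y.valuation ≤ m := (zpow_le_zpow_iff_right₀ one_lt_pR).1 hy1
  have h2 : m - 1 < -y.valuation := (zpow_lt_zpow_iff_right₀ one_lt_pR).1 hy2
  congr 1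
  omega

lemma lint_mixed (a b : ℝ) (m : ℤ) (x : ℚ_[p]) (hx : ‖x‖ = (p:ℝ)^m) :
    ∫⁻ y in pB p m, (‖x - y‖₊ : ℝ≥0∞) ^ a * (‖y‖₊ : ℝ≥0∞) ^ b ∂(padicHaar p)
      ≤ 2 * (1 - (p:ℝ≥0∞) ^ (-(a+1)))⁻¹ * (1 - (p:ℝ≥0∞) ^ (-(b+1)))⁻¹
          * (p:ℝ≥0∞) ^ ((m:ℝ) * (a+b+2) - (m:ℝ)) := by
  set μ := padicHaar p
  set c : ℝ≥0∞ := (p : ℝ≥0∞) with hc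
  have hp0 : c ≠ 0 := by rw [hc]; exact_mod_cast (Fact.out : p.Prime).ne_zero
  have hpt : c ≠ ⊤ := ENNReal.natCast_ne_top p
  have hCa : (1:ℝ≥0∞) ≤ (1 - c ^ (-(a+1)))⁻¹ := by
    rw [ENNReal.one_le_inv]
    exact tsub_le_self
  have hCb : (1:ℝ≥0∞) ≤ (1 - c ^ (-(b+1)))⁻¹ := by
    rw [ENNReal.one_le_inv]
    exact tsub_le_self
  have hexp : (m:ℝ) * (a+b+2) - (m:ℝ) = (m:ℝ)*a + (m:ℝ)*(b+1) := by ring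
  have hsplit : pB p m = pB p (m-1) ∪ (pB p m \ pB p (m-1)) := by
    rw [Set.union_diff_cancel]
    intro y hy
    simp only [pB, Set.mem_setOf_eq] at hy ⊢
    exact le_trans hy (zpow_le_zpow_right₀ (le_of_lt one_lt_pR) (by omega))
  have hmdiff : MeasurableSet (pB p m \ pB p (m-1)) :=
    (measurableSet_pB m).diff (measurableSet_pB (m-1))
  have hdisj : Disjoint (pB p (m-1)) (pB p m \ pB p (m-1)) := Set.disjoint_sdiff_right
  rw [hsplit, lintegral_union hmdiff hdisj]
  -- piece 1
  have piece1 : ∫⁻ y in pB p (m-1), (‖x - y‖₊ : ℝ≥0∞) ^ a * (‖y‖₊ : ℝ≥0∞) ^ b ∂μ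
      ≤ (1 - c ^ (-(b+1)))⁻¹ * c ^ ((m:ℝ)*a + (m:ℝ)*(b+1)) := by
    have heq : ∀ y ∈ pB p (m-1), (‖x - y‖₊ : ℝ≥0∞) ^ a * (‖y‖₊ : ℝ≥0∞) ^ b
        = c ^ ((m:ℝ)*a) * (‖y‖₊ : ℝ≥0∞) ^ b := by
      intro y hy
      have hlt : ‖y‖ < ‖x‖ := by
        rw [hx]
        exact lt_of_le_of_lt hy (zpow_lt_zpow_right₀ one_lt_pR (by omega))
      rw [enn_norm_rpow (by rw [norm_sub_eq_left hlt, hx]) a]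
    rw [setLIntegral_congr_fun (measurableSet_pB (m-1)) heq,
      lintegral_const_mul _ (measurable_enn_rpow b)]
    calc c ^ ((m:ℝ)*a) * ∫⁻ y in pB p (m-1), (‖y‖₊ : ℝ≥0∞) ^ b ∂μ
        ≤ c ^ ((m:ℝ)*a) * ∫⁻ y in pB p m, (‖y‖₊ : ℝ≥0∞) ^ b ∂μ := by
          gcongr
          exact (by
            intro y hy
            exact le_trans hy (zpow_le_zpow_right₀ (le_of_lt one_lt_pR) (by omega)))
      _ ≤ c ^ ((m:ℝ)*a) * ((1 - c ^ (-(b+1)))⁻¹ * c ^ ((m:ℝ) * (b+1))) := by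
          gcongr
          exact lint_rpow_pB b m
      _ = (1 - c ^ (-(b+1)))⁻¹ * c ^ ((m:ℝ)*a + (m:ℝ)*(b+1)) := by
          rw [ENNReal.rpow_add _ _ hp0 hpt]
          ring
  -- piece 2
  have piece2 : ∫⁻ y in pB p m \ pB p (m-1), (‖x - y‖₊ : ℝ≥0∞) ^ a * (‖y‖₊ : ℝ≥0∞) ^ b ∂μ
      ≤ (1 - c ^ (-(a+1)))⁻¹ * c ^ ((m:ℝ)*a + (m:ℝ)*(b+1)) := by
    have heq : ∀ y ∈ pB p m \ pB p (m-1), (‖x - y‖₊ : ℝ≥0∞) ^ a * (‖y‖₊ : ℝ≥0∞) ^ b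
        = (‖x - y‖₊ : ℝ≥0∞) ^ a * c ^ ((m:ℝ)*b) := by
      intro y hy
      rw [enn_norm_rpow (norm_eq_pm_of_mem_diff hy) b]
    rw [setLIntegral_congr_fun hmdiff heq]
    have hmeas2 : Measurable (fun y : ℚ_[p] => (‖x - y‖₊ : ℝ≥0∞) ^ a) :=
      (measurable_enn_rpow a).comp (measurable_const.sub measurable_id)
    rw [lintegral_mul_const _ hmeas2]
    have hT : MeasurePreserving (fun y : ℚ_[p] => x - y) μ μ :=
      Measure.measurePreserving_sub_left μ x
    have hchg : ∫⁻ y in pB p m, (‖x - y‖₊ : ℝ≥0∞) ^ a ∂μ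
        = ∫⁻ z in pB p m, (‖z‖₊ : ℝ≥0∞) ^ a ∂μ := by
      have := hT.setLIntegral_comp_preimage_emb
        ((Homeomorph.subLeft x).measurableEmbedding)
        (fun z => (‖z‖₊ : ℝ≥0∞) ^ a) (pB p m)
      rw [sub_preimage_pB (le_of_eq hx)] at this
      exact this.symm ▸ rfl
    calc (∫⁻ y in pB p m \ pB p (m-1), (‖x - y‖₊ : ℝ≥0∞) ^ a ∂μ) * c ^ ((m:ℝ)*b)
        ≤ (∫⁻ y in pB p m, (‖x - y‖₊ : ℝ≥0∞) ^ a ∂μ) * c ^ ((m:ℝ)*b) := by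
          gcongr
          exact Set.diff_subset
      _ = (∫⁻ z in pB p m, (‖z‖₊ : ℝ≥0∞) ^ a ∂μ) * c ^ ((m:ℝ)*b) := by rw [hchg]
      _ ≤ ((1 - c ^ (-(a+1)))⁻¹ * c ^ ((m:ℝ) * (a+1))) * c ^ ((m:ℝ)*b) := by
          gcongr
          exact lint_rpow_pB a m
      _ = (1 - c ^ (-(a+1)))⁻¹ * c ^ ((m:ℝ)*a + (m:ℝ)*(b+1)) := by
          rw [mul_assoc, ← ENNReal.rpow_add _ _ hp0 hpt]
          ring_nf
  calc (∫⁻ y in pB p (m-1), (‖x - y‖₊ : ℝ≥0∞) ^ a * (‖y‖₊ : ℝ≥0∞) ^ b ∂μ)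
        + ∫⁻ y in pB p m \ pB p (m-1), (‖x - y‖₊ : ℝ≥0∞) ^ a * (‖y‖₊ : ℝ≥0∞) ^ b ∂μ
      ≤ (1 - c ^ (-(b+1)))⁻¹ * c ^ ((m:ℝ)*a + (m:ℝ)*(b+1))
        + (1 - c ^ (-(a+1)))⁻¹ * c ^ ((m:ℝ)*a + (m:ℝ)*(b+1)) := add_le_add piece1 piece2
    _ ≤ (1 - c ^ (-(a+1)))⁻¹ * (1 - c ^ (-(b+1)))⁻¹ * c ^ ((m:ℝ)*a + (m:ℝ)*(b+1))
        + (1 - c ^ (-(a+1)))⁻¹ * (1 - c ^ (-(b+1)))⁻¹ * c ^ ((m:ℝ)*a + (m:ℝ)*(b+1)) := by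
          gcongr
          · calc (1 - c ^ (-(b+1)))⁻¹ = 1 * (1 - c ^ (-(b+1)))⁻¹ := (one_mul _).symm
              _ ≤ (1 - c ^ (-(a+1)))⁻¹ * (1 - c ^ (-(b+1)))⁻¹ := by gcongr
          · calc (1 - c ^ (-(a+1)))⁻¹ = (1 - c ^ (-(a+1)))⁻¹ * 1 := (mul_one _).symm
              _ ≤ (1 - c ^ (-(a+1)))⁻¹ * (1 - c ^ (-(b+1)))⁻¹ := by gcongr
    _ = 2 * (1 - c ^ (-(a+1)))⁻¹ * (1 - c ^ (-(b+1)))⁻¹ * c ^ ((m:ℝ) * (a+b+2) - (m:ℝ)) := by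
        rw [hexp, two_mul]
        ring

lemma ofReal_norm_rpow_le (z : ℚ_[p]) (e : ℝ) :
    ENNReal.ofReal (‖z‖ ^ e) ≤ (‖z‖₊ : ℝ≥0∞) ^ e := by
  by_cases hz : z = 0
  · subst hz
    by_cases he : e = 0
    · simp [he]
    · simp [Real.zero_rpow he]
  · have hpos : 0 < ‖z‖ := norm_pos_iff.2 hz
    rw [show (‖z‖₊ : ℝ≥0∞) = ENNReal.ofReal ‖z‖ from (ofReal_norm z).symm, ENNReal.ofReal_rpow_of_pos hpos]

lemma log_le_inv_mul_rpow {u ε : ℝ} (hu : 1 ≤ u) (hε : 0 < ε) :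
    Real.log u ≤ (1/ε) * u ^ ε := by
  have hu0 : 0 < u := lt_of_lt_of_le one_pos hu
  have h1 : Real.log (u ^ ε) = ε * Real.log u := Real.log_rpow hu0 ε
  have h2 : Real.log (u ^ ε) ≤ u ^ ε := by
    have := Real.log_le_sub_one_of_pos (Real.rpow_pos_of_pos hu0 ε)
    linarith
  rw [h1] at h2
  rw [div_mul_eq_mul_div, one_mul, le_div_iff₀ hε]
  linarith [h2]

lemma Iker_bound_ne_one {α : ℝ} (hne : α ≠ 1) (x y : ℚ_[p]) :
    ENNReal.ofReal |Iker p α x y| ≤ (‖x-y‖₊ : ℝ≥0∞) ^ (α-1) + (‖y‖₊ : ℝ≥0∞) ^ (α-1) := by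
  rw [show Iker p α x y = ‖x - y‖ ^ (α-1) - ‖y‖ ^ (α-1) from if_neg hne]
  have hA : (0:ℝ) ≤ ‖x - y‖ ^ (α-1) := Real.rpow_nonneg (norm_nonneg _) _
  have hB : (0:ℝ) ≤ ‖y‖ ^ (α-1) := Real.rpow_nonneg (norm_nonneg _) _
  calc ENNReal.ofReal |‖x - y‖ ^ (α-1) - ‖y‖ ^ (α-1)|
      ≤ ENNReal.ofReal (‖x - y‖ ^ (α-1) + ‖y‖ ^ (α-1)) := by
        apply ENNReal.ofReal_le_ofReal
        calc |‖x - y‖ ^ (α-1) - ‖y‖ ^ (α-1)| ≤ |‖x - y‖ ^ (α-1)| + |‖y‖ ^ (α-1)| := abs_sub _ _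
          _ = ‖x - y‖ ^ (α-1) + ‖y‖ ^ (α-1) := by rw [abs_of_nonneg hA, abs_of_nonneg hB]
    _ = ENNReal.ofReal (‖x - y‖ ^ (α-1)) + ENNReal.ofReal (‖y‖ ^ (α-1)) :=
        ENNReal.ofReal_add hA hB
    _ ≤ (‖x-y‖₊ : ℝ≥0∞) ^ (α-1) + (‖y‖₊ : ℝ≥0∞) ^ (α-1) :=
        add_le_add (ofReal_norm_rpow_le _ _) (ofReal_norm_rpow_le _ _)

lemma Iker_bound_one {x y : ℚ_[p]} {m : ℤ} (hx : ‖x‖ = (p:ℝ)^m) (hy : ‖y‖ ≤ ‖x‖)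
    {ε : ℝ} (hε : 0 < ε) :
    ENNReal.ofReal |Iker p 1 x y| ≤ ENNReal.ofReal (1/ε) * (p:ℝ≥0∞) ^ ((m:ℝ)*ε) *
      ((‖x-y‖₊ : ℝ≥0∞) ^ (-ε) + (‖y‖₊ : ℝ≥0∞) ^ (-ε)) := by
  have hcoef : (0:ℝ≥0∞) < ENNReal.ofReal (1/ε) * (p:ℝ≥0∞) ^ ((m:ℝ)*ε) := by
    apply ENNReal.mul_pos
    · simp only [ne_eq, ENNReal.ofReal_eq_zero, not_le]
      positivity
    · apply ne_of_gt
      apply ENNReal.rpow_pos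
      · exact_mod_cast (Fact.out : p.Prime).pos
      · exact ENNReal.natCast_ne_top p
  by_cases hy0 : y = 0
  · subst hy0
    have : ((‖(0:ℚ_[p])‖₊ : ℝ≥0∞)) ^ (-ε) = ⊤ := by
      simp [ENNReal.zero_rpow_of_neg (neg_neg_of_pos hε)]
    rw [this]
    rw [add_top, ENNReal.mul_top (ne_of_gt hcoef)]
    exact le_top
  by_cases hxy : x - y = 0
  · rw [hxy]
    have : ((‖(0:ℚ_[p])‖₊ : ℝ≥0∞)) ^ (-ε) = ⊤ := by
      simp [ENNReal.zero_rpow_of_neg (neg_neg_of_pos hε)]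
    rw [this, top_add, ENNReal.mul_top (ne_of_gt hcoef)]
    exact le_top
  -- main case
  have hxne : x ≠ 0 := by
    intro h
    rw [h, norm_zero] at hx
    exact absurd hx.symm (ne_of_gt (zpow_pos pR_pos m))
  have hA : 0 < ‖x - y‖ := norm_pos_iff.2 hxy
  have hB : 0 < ‖y‖ := norm_pos_iff.2 hy0
  have hM : 0 < ‖x‖ := norm_pos_iff.2 hxne
  have hAM : ‖x - y‖ ≤ ‖x‖ := by
    rw [sub_eq_add_neg]
    refine le_trans (Padic.nonarchimedean _ _) ?_
    rw [norm_neg]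
    exact max_le le_rfl hy
  have habs : |Iker p 1 x y| ≤ (Real.log ‖x‖ - Real.log ‖x - y‖)
      + (Real.log ‖x‖ - Real.log ‖y‖) := by
    rw [show Iker p 1 x y = Real.log ‖x - y‖ - Real.log ‖y‖ from if_pos rfl]
    have h1 : 0 ≤ Real.log ‖x‖ - Real.log ‖x - y‖ :=
      sub_nonneg.2 (Real.log_le_log hA hAM)
    have h2 : 0 ≤ Real.log ‖x‖ - Real.log ‖y‖ :=
      sub_nonneg.2 (Real.log_le_log hB hy)
    rw [abs_le]
    constructor <;> linarith
  have hlog1 : Real.log ‖x‖ - Real.log ‖x - y‖ ≤ (1/ε) * (‖x‖^ε * ‖x - y‖^(-ε)) := by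
    rw [← Real.log_div (ne_of_gt hM) (ne_of_gt hA)]
    refine le_trans (log_le_inv_mul_rpow ((one_le_div hA).2 hAM) hε) ?_
    rw [Real.div_rpow (le_of_lt hM) (le_of_lt hA), Real.rpow_neg (le_of_lt hA)]
    ring_nf
    exact le_rfl
  have hlog2 : Real.log ‖x‖ - Real.log ‖y‖ ≤ (1/ε) * (‖x‖^ε * ‖y‖^(-ε)) := by
    rw [← Real.log_div (ne_of_gt hM) (ne_of_gt hB)]
    refine le_trans (log_le_inv_mul_rpow ((one_le_div hB).2 hy) hε) ?_
    rw [Real.div_rpow (le_of_lt hM) (le_of_lt hB), Real.rpow_neg (le_of_lt hB)]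
    ring_nf
    exact le_rfl
  have htotal : |Iker p 1 x y| ≤ (1/ε) * (‖x‖^ε * ‖x - y‖^(-ε)) + (1/ε) * (‖x‖^ε * ‖y‖^(-ε)) :=
    le_trans habs (add_le_add hlog1 hlog2)
  calc ENNReal.ofReal |Iker p 1 x y|
      ≤ ENNReal.ofReal ((1/ε) * (‖x‖^ε * ‖x - y‖^(-ε)) + (1/ε) * (‖x‖^ε * ‖y‖^(-ε))) :=
        ENNReal.ofReal_le_ofReal htotal
    _ ≤ ENNReal.ofReal (1/ε) * ENNReal.ofReal (‖x‖^ε) *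
          (ENNReal.ofReal (‖x - y‖^(-ε)) + ENNReal.ofReal (‖y‖^(-ε))) := by
        refine le_trans (ENNReal.ofReal_add_le) ?_
        rw [ENNReal.ofReal_mul (by positivity), ENNReal.ofReal_mul (by positivity),
          ENNReal.ofReal_mul (by positivity), ENNReal.ofReal_mul (by positivity)]
        exact le_of_eq (by ring)
    _ ≤ ENNReal.ofReal (1/ε) * (p:ℝ≥0∞) ^ ((m:ℝ)*ε) *
          ((‖x-y‖₊ : ℝ≥0∞) ^ (-ε) + (‖y‖₊ : ℝ≥0∞) ^ (-ε)) := by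
        gcongr
        · calc ENNReal.ofReal (‖x‖^ε) ≤ (‖x‖₊ : ℝ≥0∞) ^ ε := ofReal_norm_rpow_le _ _
            _ = (p:ℝ≥0∞) ^ ((m:ℝ)*ε) := enn_norm_rpow hx ε
        · exact ofReal_norm_rpow_le _ _
        · exact ofReal_norm_rpow_le _ _

lemma restrict_pB_zero (m : ℤ) :
    (padicHaar p).restrict (pB p m) = (padicHaar p).restrict (pB p m \ {0}) := by
  apply Measure.restrict_congr_set
  rw [MeasureTheory.ae_eq_set]
  constructor
  · exact measure_mono_null (fun y hy => by
      simp only [Set.mem_diff, Set.mem_diff, Set.mem_singleton_iff, not_and, not_not] at hy ⊢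
      exact hy.2 hy.1) (padicHaar_singleton 0)
  · refine measure_mono_null ?_ (padicHaar_singleton (0:ℚ_[p]))
    rintro y ⟨⟨hy1, _⟩, hy2⟩
    exact absurd hy1 hy2

lemma one_le_Cinv (u : ℝ) : (1:ℝ≥0∞) ≤ (1 - (p:ℝ≥0∞) ^ (-u))⁻¹ := by
  rw [ENNReal.one_le_inv]
  exact tsub_le_self

lemma Cinv_mono {u v : ℝ} (h : u ≤ v) :
    (1 - (p:ℝ≥0∞) ^ (-v))⁻¹ ≤ (1 - (p:ℝ≥0∞) ^ (-u))⁻¹ := by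
  apply ENNReal.inv_le_inv.2
  apply tsub_le_tsub_left
  apply ENNReal.rpow_le_rpow_of_exponent_le
  · exact_mod_cast le_of_lt (Fact.out : p.Prime).one_lt
  · linarith

lemma Cinv_ne_top {u : ℝ} (hu : 0 < u) : (1 - (p:ℝ≥0∞) ^ (-u))⁻¹ ≠ ⊤ := by
  rw [Ne, ENNReal.inv_eq_top]
  intro h
  rw [tsub_eq_zero_iff_le] at h
  have : (p:ℝ≥0∞) ^ (-u) < 1 := ENNReal.rpow_lt_one_of_one_lt_of_neg
    (by exact_mod_cast (Fact.out : p.Prime).one_lt) (by linarith)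
  exact absurd h (not_le.2 this)

lemma est_core {x : ℚ_[p]} {m : ℤ} (hx : ‖x‖ = (p:ℝ)^m) (a b : ℝ) :
    ∫⁻ y in pB p m \ {0},
        ((‖x - y‖₊ : ℝ≥0∞) ^ a + (‖y‖₊ : ℝ≥0∞) ^ a) * (‖y‖₊ : ℝ≥0∞) ^ b ∂(padicHaar p)
      ≤ (2 * (1 - (p:ℝ≥0∞) ^ (-(a+1)))⁻¹ * (1 - (p:ℝ≥0∞) ^ (-(b+1)))⁻¹
          + (1 - (p:ℝ≥0∞) ^ (-(a+b+1)))⁻¹) * (p:ℝ≥0∞) ^ ((m:ℝ) * (a+b+1)) := by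
  set μ := padicHaar p
  set c : ℝ≥0∞ := (p : ℝ≥0∞) with hc
  have hptws : ∀ y ∈ pB p m \ ({0} : Set ℚ_[p]),
      ((‖x - y‖₊ : ℝ≥0∞) ^ a + (‖y‖₊ : ℝ≥0∞) ^ a) * (‖y‖₊ : ℝ≥0∞) ^ b
        = (‖x - y‖₊ : ℝ≥0∞) ^ a * (‖y‖₊ : ℝ≥0∞) ^ b + (‖y‖₊ : ℝ≥0∞) ^ (a+b) := by
    intro y hy
    have hy0 : y ≠ 0 := fun h => hy.2 (by simp [h])
    have h0 : (‖y‖₊ : ℝ≥0∞) ≠ 0 := by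
      simp only [ne_eq, ENNReal.coe_eq_zero, nnnorm_eq_zero]
      exact hy0
    rw [add_mul, ENNReal.rpow_add a b h0 ENNReal.coe_ne_top]
  rw [setLIntegral_congr_fun ((measurableSet_pB m).diff (measurableSet_singleton 0))
    hptws]
  have hmono : ∫⁻ y in pB p m \ {0},
      ((‖x - y‖₊ : ℝ≥0∞) ^ a * (‖y‖₊ : ℝ≥0∞) ^ b + (‖y‖₊ : ℝ≥0∞) ^ (a+b)) ∂μ
      ≤ ∫⁻ y in pB p m,
      ((‖x - y‖₊ : ℝ≥0∞) ^ a * (‖y‖₊ : ℝ≥0∞) ^ b + (‖y‖₊ : ℝ≥0∞) ^ (a+b)) ∂μ :=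
    lintegral_mono_set Set.diff_subset
  refine le_trans hmono ?_
  have hmeasf : Measurable (fun y : ℚ_[p] => (‖x - y‖₊ : ℝ≥0∞) ^ a * (‖y‖₊ : ℝ≥0∞) ^ b) :=
    ((measurable_enn_rpow a).comp (measurable_const.sub measurable_id)).mul
      (measurable_enn_rpow b)
  rw [lintegral_add_left hmeasf]
  have h1 := lint_mixed a b m x hx
  have h2 := lint_rpow_pB (p := p) (a+b) m
  have hexp1 : (m:ℝ) * (a+b+2) - (m:ℝ) = (m:ℝ) * (a+b+1) := by ring
  have hexp2 : (m:ℝ) * ((a+b)+1) = (m:ℝ) * (a+b+1) := by ring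
  rw [hexp1] at h1
  rw [hexp2] at h2
  calc (∫⁻ y in pB p m, (‖x - y‖₊ : ℝ≥0∞) ^ a * (‖y‖₊ : ℝ≥0∞) ^ b ∂μ)
        + ∫⁻ y in pB p m, (‖y‖₊ : ℝ≥0∞) ^ (a+b) ∂μ
      ≤ 2 * (1 - c ^ (-(a+1)))⁻¹ * (1 - c ^ (-(b+1)))⁻¹ * c ^ ((m:ℝ) * (a+b+1))
        + (1 - c ^ (-(a+b+1)))⁻¹ * c ^ ((m:ℝ) * (a+b+1)) := add_le_add h1 h2
    _ = (2 * (1 - c ^ (-(a+1)))⁻¹ * (1 - c ^ (-(b+1)))⁻¹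
        + (1 - c ^ (-(a+b+1)))⁻¹) * c ^ ((m:ℝ) * (a+b+1)) := by ring

lemma ennp_pos : (0:ℝ≥0∞) < (p:ℝ≥0∞) := by
  exact_mod_cast (Fact.out : p.Prime).pos

lemma ennp_rpow_ne_top (x : ℝ) : (p:ℝ≥0∞) ^ x ≠ ⊤ := by
  rcases le_or_gt 0 x with h | h
  · exact ENNReal.rpow_ne_top_of_nonneg h (ENNReal.natCast_ne_top p)
  · rw [show x = -(-x) by ring, ENNReal.rpow_neg, Ne, ENNReal.inv_eq_top]
    exact ne_of_gt (ENNReal.rpow_pos ennp_pos (ENNReal.natCast_ne_top p))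

lemma ennp_rpow_ne_zero (x : ℝ) : (p:ℝ≥0∞) ^ x ≠ 0 :=
  ne_of_gt (ENNReal.rpow_pos ennp_pos (ENNReal.natCast_ne_top p))

lemma mul_le_mul_mid {A B K : ℝ≥0∞} (hK : 1 ≤ K) : A * B ≤ A * K * B := by
  calc A * B = A * 1 * B := by rw [mul_one]
    _ ≤ A * K * B := by gcongr

lemma key_est {α γ : ℝ} (hα : 0 < α) (hγ0 : 0 < γ) (hγ1 : γ < 1) (hγα : γ < α)
    (n : ℕ) {μ' : ℝ} (hμ' : 0 < μ') {φ : ℚ_[p] → ℝ}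
    (hφ : ∀ t : ℚ_[p], t ≠ 0 → |φ t| ≤ μ' * ‖t‖ ^ ((n : ℝ) * α - ((n : ℝ) + 1) * γ))
    {x : ℚ_[p]} {m : ℤ} (hx : ‖x‖ = (p:ℝ)^m) :
    ∫⁻ y in pB p m, ENNReal.ofReal ‖Iker p α x y * φ y‖ ∂(padicHaar p)
      ≤ ENNReal.ofReal μ' * ENNReal.ofReal (max 1 (2/(1-γ)))
          * (3 * ((1 - (p:ℝ≥0∞) ^ (-(min (α-γ) ((1-γ)/2))))⁻¹) ^ 2)
          * (p:ℝ≥0∞) ^ ((m:ℝ) * (((n:ℝ)+1)*(α-γ))) := by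
  set c : ℝ≥0∞ := (p : ℝ≥0∞) with hc
  have hp0 : c ≠ 0 := by rw [hc]; exact_mod_cast (Fact.out : p.Prime).ne_zero
  have hpt : c ≠ ⊤ := ENNReal.natCast_ne_top p
  set β : ℝ := (n:ℝ) * α - ((n:ℝ)+1) * γ with hβ
  set δ : ℝ := min (α-γ) ((1-γ)/2) with hδ
  set Cδ : ℝ≥0∞ := (1 - c ^ (-δ))⁻¹ with hCδ
  set KR : ℝ := max 1 (2/(1-γ)) with hKR
  have hn0 : (0:ℝ) ≤ (n:ℝ) := Nat.cast_nonneg n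
  have hαγ : 0 < α - γ := by linarith
  have hδβ : δ ≤ β + 1 := by
    refine le_trans (min_le_right _ _) ?_
    have h1 : 0 ≤ (n:ℝ) * (α - γ) := mul_nonneg hn0 (le_of_lt hαγ)
    rw [hβ]; nlinarith
  have hone_le_KR : (1:ℝ≥0∞) ≤ ENNReal.ofReal KR :=
    ENNReal.one_le_ofReal.2 (le_max_left _ _)
  have hCδ1 : (1:ℝ≥0∞) ≤ Cδ := one_le_Cinv δ
  have hmeasD : MeasurableSet (pB p m \ ({0} : Set ℚ_[p])) :=
    (measurableSet_pB m).diff (measurableSet_singleton 0)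
  have hconsts : ∀ u v w : ℝ, δ ≤ u → δ ≤ v → δ ≤ w →
      2 * (1 - c ^ (-u))⁻¹ * (1 - c ^ (-v))⁻¹ + (1 - c ^ (-w))⁻¹ ≤ 3 * Cδ ^ 2 := by
    intro u v w hu hv hw
    have h1 : (1 - c ^ (-u))⁻¹ ≤ Cδ := Cinv_mono hu
    have h2 : (1 - c ^ (-v))⁻¹ ≤ Cδ := Cinv_mono hv
    have h3 : (1 - c ^ (-w))⁻¹ ≤ Cδ := Cinv_mono hw
    calc 2 * (1 - c ^ (-u))⁻¹ * (1 - c ^ (-v))⁻¹ + (1 - c ^ (-w))⁻¹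
        ≤ 2 * Cδ * Cδ + Cδ * Cδ := by
          refine add_le_add (by gcongr) ?_
          calc (1 - c ^ (-w))⁻¹ ≤ Cδ := h3
            _ = 1 * Cδ := (one_mul _).symm
            _ ≤ Cδ * Cδ := by gcongr
      _ = 3 * Cδ ^ 2 := by ring
  by_cases hα1 : α = 1
  · -- case α = 1
    subst hα1
    set ε : ℝ := (1-γ)/2 with hε
    have hε0 : 0 < ε := by rw [hε]; linarith
    have hδa : δ ≤ -ε + 1 := by
      refine le_trans (min_le_right _ _) ?_
      rw [hε]; linarith
    have hδab : δ ≤ -ε + β + 1 := by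
      refine le_trans (min_le_right _ _) ?_
      have h1 : 0 ≤ (n:ℝ) * (1 - γ) := mul_nonneg hn0 (by linarith)
      rw [hε, hβ]; nlinarith
    have hKc : ENNReal.ofReal μ' * (ENNReal.ofReal (1/ε) * c ^ ((m:ℝ)*ε)) ≠ ⊤ :=
      ENNReal.mul_ne_top ENNReal.ofReal_ne_top
        (ENNReal.mul_ne_top ENNReal.ofReal_ne_top (ennp_rpow_ne_top _))
    have hptws : ∀ y ∈ pB p m \ ({0} : Set ℚ_[p]),
        ENNReal.ofReal ‖Iker p 1 x y * φ y‖
          ≤ (ENNReal.ofReal μ' * (ENNReal.ofReal (1/ε) * c ^ ((m:ℝ)*ε)))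
            * (((‖x - y‖₊ : ℝ≥0∞) ^ (-ε) + (‖y‖₊ : ℝ≥0∞) ^ (-ε)) * (‖y‖₊ : ℝ≥0∞) ^ β) := by
      intro y hy
      have hy0 : y ≠ 0 := fun h => hy.2 (by simp [h])
      have hyx : ‖y‖ ≤ ‖x‖ := by rw [hx]; exact hy.1
      rw [Real.norm_eq_abs, abs_mul]
      calc ENNReal.ofReal (|Iker p 1 x y| * |φ y|)
          ≤ ENNReal.ofReal (|Iker p 1 x y| * (μ' * ‖y‖ ^ β)) :=
            ENNReal.ofReal_le_ofReal
              (mul_le_mul_of_nonneg_left (hφ y hy0) (abs_nonneg _))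
        _ = ENNReal.ofReal |Iker p 1 x y| * (ENNReal.ofReal μ' * ENNReal.ofReal (‖y‖ ^ β)) := by
            rw [ENNReal.ofReal_mul (abs_nonneg _), ENNReal.ofReal_mul (le_of_lt hμ')]
        _ ≤ (ENNReal.ofReal (1/ε) * c ^ ((m:ℝ)*ε)
              * ((‖x - y‖₊ : ℝ≥0∞) ^ (-ε) + (‖y‖₊ : ℝ≥0∞) ^ (-ε)))
            * (ENNReal.ofReal μ' * (‖y‖₊ : ℝ≥0∞) ^ β) := by
            exact mul_le_mul' (Iker_bound_one hx hyx hε0)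
              (mul_le_mul' le_rfl (ofReal_norm_rpow_le y β))
        _ = (ENNReal.ofReal μ' * (ENNReal.ofReal (1/ε) * c ^ ((m:ℝ)*ε)))
            * (((‖x - y‖₊ : ℝ≥0∞) ^ (-ε) + (‖y‖₊ : ℝ≥0∞) ^ (-ε)) * (‖y‖₊ : ℝ≥0∞) ^ β) := by
            ring
    calc ∫⁻ y in pB p m, ENNReal.ofReal ‖Iker p 1 x y * φ y‖ ∂(padicHaar p)
        = ∫⁻ y in pB p m \ {0}, ENNReal.ofReal ‖Iker p 1 x y * φ y‖ ∂(padicHaar p) := by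
          rw [restrict_pB_zero]
      _ ≤ ∫⁻ y in pB p m \ {0},
            (ENNReal.ofReal μ' * (ENNReal.ofReal (1/ε) * c ^ ((m:ℝ)*ε)))
            * (((‖x - y‖₊ : ℝ≥0∞) ^ (-ε) + (‖y‖₊ : ℝ≥0∞) ^ (-ε)) * (‖y‖₊ : ℝ≥0∞) ^ β)
            ∂(padicHaar p) := setLIntegral_mono' hmeasD hptws
      _ = (ENNReal.ofReal μ' * (ENNReal.ofReal (1/ε) * c ^ ((m:ℝ)*ε)))
            * ∫⁻ y in pB p m \ {0},
              ((‖x - y‖₊ : ℝ≥0∞) ^ (-ε) + (‖y‖₊ : ℝ≥0∞) ^ (-ε)) * (‖y‖₊ : ℝ≥0∞) ^ β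
            ∂(padicHaar p) := lintegral_const_mul' _ _ hKc
      _ ≤ (ENNReal.ofReal μ' * (ENNReal.ofReal (1/ε) * c ^ ((m:ℝ)*ε)))
            * ((2 * (1 - c ^ (-(-ε+1)))⁻¹ * (1 - c ^ (-(β+1)))⁻¹
              + (1 - c ^ (-(-ε+β+1)))⁻¹) * c ^ ((m:ℝ) * (-ε+β+1))) := by
          gcongr
          exact est_core hx (-ε) β
      _ ≤ (ENNReal.ofReal μ' * (ENNReal.ofReal (1/ε) * c ^ ((m:ℝ)*ε)))
            * ((3 * Cδ ^ 2) * c ^ ((m:ℝ) * (-ε+β+1))) := by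
          gcongr
          exact hconsts _ _ _ hδa hδβ hδab
      _ = ENNReal.ofReal μ' * ENNReal.ofReal (1/ε) * (3 * Cδ ^ 2)
            * (c ^ ((m:ℝ)*ε) * c ^ ((m:ℝ) * (-ε+β+1))) := by ring
      _ = ENNReal.ofReal μ' * ENNReal.ofReal (1/ε) * (3 * Cδ ^ 2)
            * c ^ ((m:ℝ) * (((n:ℝ)+1)*(1-γ))) := by
          rw [← ENNReal.rpow_add _ _ hp0 hpt]
          congr 1
          rw [hβ]; ring
      _ ≤ ENNReal.ofReal μ' * ENNReal.ofReal KR * (3 * Cδ ^ 2)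
            * c ^ ((m:ℝ) * (((n:ℝ)+1)*(1-γ))) := by
          gcongr
          rw [hε, hKR, one_div_div]
          exact le_max_right _ _
  · -- case α ≠ 1
    set a : ℝ := α - 1 with ha
    have hδa : δ ≤ a + 1 := by
      refine le_trans (min_le_left _ _) ?_
      rw [ha]; linarith
    have hδab : δ ≤ a + β + 1 := by
      refine le_trans (min_le_left _ _) ?_
      have h1 : 0 ≤ (n:ℝ) * (α - γ) := mul_nonneg hn0 (le_of_lt hαγ)
      rw [ha, hβ]; nlinarith
    have hptws : ∀ y ∈ pB p m \ ({0} : Set ℚ_[p]),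
        ENNReal.ofReal ‖Iker p α x y * φ y‖
          ≤ ENNReal.ofReal μ'
            * (((‖x - y‖₊ : ℝ≥0∞) ^ a + (‖y‖₊ : ℝ≥0∞) ^ a) * (‖y‖₊ : ℝ≥0∞) ^ β) := by
      intro y hy
      have hy0 : y ≠ 0 := fun h => hy.2 (by simp [h])
      rw [Real.norm_eq_abs, abs_mul]
      calc ENNReal.ofReal (|Iker p α x y| * |φ y|)
          ≤ ENNReal.ofReal (|Iker p α x y| * (μ' * ‖y‖ ^ β)) :=
            ENNReal.ofReal_le_ofReal
              (mul_le_mul_of_nonneg_left (hφ y hy0) (abs_nonneg _))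
        _ = ENNReal.ofReal |Iker p α x y| * (ENNReal.ofReal μ' * ENNReal.ofReal (‖y‖ ^ β)) := by
            rw [ENNReal.ofReal_mul (abs_nonneg _), ENNReal.ofReal_mul (le_of_lt hμ')]
        _ ≤ ((‖x - y‖₊ : ℝ≥0∞) ^ a + (‖y‖₊ : ℝ≥0∞) ^ a)
            * (ENNReal.ofReal μ' * (‖y‖₊ : ℝ≥0∞) ^ β) := by
            rw [ha]
            exact mul_le_mul' (Iker_bound_ne_one hα1 x y)
              (mul_le_mul' le_rfl (ofReal_norm_rpow_le y β))
        _ = ENNReal.ofReal μ'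
            * (((‖x - y‖₊ : ℝ≥0∞) ^ a + (‖y‖₊ : ℝ≥0∞) ^ a) * (‖y‖₊ : ℝ≥0∞) ^ β) := by
            ring
    calc ∫⁻ y in pB p m, ENNReal.ofReal ‖Iker p α x y * φ y‖ ∂(padicHaar p)
        = ∫⁻ y in pB p m \ {0}, ENNReal.ofReal ‖Iker p α x y * φ y‖ ∂(padicHaar p) := by
          rw [restrict_pB_zero]
      _ ≤ ∫⁻ y in pB p m \ {0},
            ENNReal.ofReal μ'
            * (((‖x - y‖₊ : ℝ≥0∞) ^ a + (‖y‖₊ : ℝ≥0∞) ^ a) * (‖y‖₊ : ℝ≥0∞) ^ β)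
            ∂(padicHaar p) := setLIntegral_mono' hmeasD hptws
      _ = ENNReal.ofReal μ'
            * ∫⁻ y in pB p m \ {0},
              ((‖x - y‖₊ : ℝ≥0∞) ^ a + (‖y‖₊ : ℝ≥0∞) ^ a) * (‖y‖₊ : ℝ≥0∞) ^ β
            ∂(padicHaar p) := lintegral_const_mul' _ _ ENNReal.ofReal_ne_top
      _ ≤ ENNReal.ofReal μ'
            * ((2 * (1 - c ^ (-(a+1)))⁻¹ * (1 - c ^ (-(β+1)))⁻¹
              + (1 - c ^ (-(a+β+1)))⁻¹) * c ^ ((m:ℝ) * (a+β+1))) := by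
          gcongr
          exact est_core hx a β
      _ ≤ ENNReal.ofReal μ' * ((3 * Cδ ^ 2) * c ^ ((m:ℝ) * (a+β+1))) := by
          gcongr
          exact hconsts _ _ _ hδa hδβ hδab
      _ = ENNReal.ofReal μ' * (3 * Cδ ^ 2) * c ^ ((m:ℝ) * (((n:ℝ)+1)*(α-γ))) := by
          rw [show ((m:ℝ) * (a+β+1)) = (m:ℝ) * (((n:ℝ)+1)*(α-γ)) from by rw [ha, hβ]; ring]
          ring
      _ ≤ ENNReal.ofReal μ' * ENNReal.ofReal KR * (3 * Cδ ^ 2)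
            * c ^ ((m:ℝ) * (((n:ℝ)+1)*(α-γ))) := by
          rw [mul_assoc (ENNReal.ofReal μ' * ENNReal.ofReal KR)]
          rw [mul_assoc (ENNReal.ofReal μ')]
          exact mul_le_mul_mid hone_le_KR

end Aux

open ENNReal in
/-- the constants `C_n` can be chosen bounded uniformly in `n`. -/
theorem Iop_bound_uniform (p : ℕ) [Fact p.Prime] (α γ : ℝ) (hα : 0 < α) (hγ0 : 0 < γ)
    (hγ : γ < min 1 α) :
    ∃ C : ℝ, 0 < C ∧ ∀ n : ℕ, ∀ μ' : ℝ, 0 < μ' → ∀ φ : ℚ_[p] → ℝ, Radial p φ →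
      (∀ t : ℚ_[p], t ≠ 0 → |φ t| ≤ μ' * ‖t‖ ^ ((n : ℝ) * α - ((n : ℝ) + 1) * γ)) →
      ∀ t : ℚ_[p], t ≠ 0 →
        |Iop p α φ t| ≤ C * μ' * ‖t‖ ^ (((n : ℝ) + 1) * (α - γ)) := by
  have hγ1 : γ < 1 := lt_of_lt_of_le hγ (min_le_left _ _)
  have hγα : γ < α := lt_of_lt_of_le hγ (min_le_right _ _)
  set δ : ℝ := min (α-γ) ((1-γ)/2) with hδ
  have hδ0 : 0 < δ := lt_min (by linarith) (by linarith)
  set CδR : ℝ := ((1 - (p:ℝ≥0∞) ^ (-δ))⁻¹).toReal with hCδR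
  set KR : ℝ := max 1 (2/(1-γ)) with hKR
  have hKR0 : 0 ≤ KR := le_trans zero_le_one (le_max_left _ _)
  refine ⟨max 1 (|Icoef p α| * (KR * (3 * CδR^2))), lt_of_lt_of_le one_pos (le_max_left _ _),
    ?_⟩
  intro n μ' hμ' φ _hrad hφ t ht
  set m : ℤ := -t.valuation with hm
  have hx : ‖t‖ = (p:ℝ)^m := Padic.norm_eq_zpow_neg_valuation ht
  have hset : {y : ℚ_[p] | ‖y‖ ≤ ‖t‖} = pB p m := by
    ext y; simp [pB, hx]
  set E : ℝ := ((n:ℝ)+1) * (α - γ) with hE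
  have hlint := key_est hα hγ0 hγ1 hγα n hμ' hφ hx
  have hQtop : ENNReal.ofReal μ' * ENNReal.ofReal KR
      * (3 * ((1 - (p:ℝ≥0∞) ^ (-δ))⁻¹) ^ 2) * (p:ℝ≥0∞) ^ ((m:ℝ) * E) ≠ ⊤ := by
    refine ENNReal.mul_ne_top (ENNReal.mul_ne_top (ENNReal.mul_ne_top
      ENNReal.ofReal_ne_top ENNReal.ofReal_ne_top) ?_) (ennp_rpow_ne_top _)
    exact ENNReal.mul_ne_top (by simp) (pow_ne_top (Cinv_ne_top hδ0))
  have hint_le : |∫ y in {y : ℚ_[p] | ‖y‖ ≤ ‖t‖}, Iker p α t y * φ y ∂(padicHaar p)|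
      ≤ μ' * KR * (3 * CδR^2) * ‖t‖ ^ E := by
    rw [← Real.norm_eq_abs, hset]
    refine le_trans (norm_integral_le_lintegral_norm _) ?_
    have h1 : (∫⁻ y in pB p m, ENNReal.ofReal ‖Iker p α t y * φ y‖ ∂(padicHaar p)).toReal
        ≤ (ENNReal.ofReal μ' * ENNReal.ofReal KR
          * (3 * ((1 - (p:ℝ≥0∞) ^ (-δ))⁻¹) ^ 2) * (p:ℝ≥0∞) ^ ((m:ℝ) * E)).toReal :=
      ENNReal.toReal_mono hQtop hlint
    refine le_trans h1 (le_of_eq ?_)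
    rw [ENNReal.toReal_mul, ENNReal.toReal_mul, ENNReal.toReal_mul,
      ENNReal.toReal_ofReal (le_of_lt hμ'), ENNReal.toReal_ofReal hKR0,
      ENNReal.toReal_mul, ENNReal.toReal_pow, ENNReal.toReal_ofNat]
    congr 1
    rw [← ENNReal.toReal_rpow, ENNReal.toReal_natCast]
    rw [hx, ← Real.rpow_intCast (p:ℝ) m, ← Real.rpow_mul (le_of_lt pR_pos)]
  have hIop : |Iop p α φ t| = |Icoef p α|
      * |∫ y in {y : ℚ_[p] | ‖y‖ ≤ ‖t‖}, Iker p α t y * φ y ∂(padicHaar p)| := by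
    rw [Iop, abs_mul]
  rw [hIop]
  have hE0 : 0 < ‖t‖ ^ E := Real.rpow_pos_of_pos (norm_pos_iff.2 ht) E
  have hCδR0 : 0 ≤ CδR := ENNReal.toReal_nonneg
  calc |Icoef p α|
        * |∫ y in {y : ℚ_[p] | ‖y‖ ≤ ‖t‖}, Iker p α t y * φ y ∂(padicHaar p)|
      ≤ |Icoef p α| * (μ' * KR * (3 * CδR^2) * ‖t‖ ^ E) :=
        mul_le_mul_of_nonneg_left hint_le (abs_nonneg _)
    _ = (|Icoef p α| * (KR * (3 * CδR^2))) * μ' * ‖t‖ ^ E := by ring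
    _ ≤ max 1 (|Icoef p α| * (KR * (3 * CδR^2))) * μ' * ‖t‖ ^ E := by
        exact mul_le_mul_of_nonneg_right (mul_le_mul_of_nonneg_right
          (le_max_right _ _) hμ'.le) hE0.le
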